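/- arXiv:1602.08376 — 2 statements merged into one kernel-verified Lean document; each statement's English description precedes it below -/
import Mathlib

section
/- Let Ω ⊂ ℝ^m be open with finite positive measure, let γ_m = (2π)^m ω_m^{-2} λ_1(𝔅_m)^{-m/2} < 1, and set ε(Ω) = inf{ε > 0 : μ_Ω(ε) ≥ (1/2)(1 − γ_m)|Ω|}. If λ_n(Ω) is a Courant-sharp Dirichlet eigenvalue of Ω, then λ_n(Ω) ≤ (2π m² / ((1 − γ_m) ε(Ω)))². -/
/-!
Evaluating the remainder bound at `ε = 2π m^{3/2} / ((1 - γ_m) √λ_n)` turns its second term into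
half of the Pleijel lower bound, so the inner boundary layer of width `√m ε = 2π m² / ((1 - γ_m) √λ_n)`
carries at least `(1 - γ_m)|Ω| / 2`; hence `ε(Ω) ≤ 2π m² / ((1 - γ_m) √λ_n)`. This is only useful
because `ε(Ω) > 0`: the boundary layers of an open set of finite measure shrink to `Ω ∩ ∂Ω = ∅`,
so their measures tend to `0`.
-/

open MeasureTheory Real
open Metric Filter Topology Set
open scoped ENNReal

def boundaryLayer {X : Type*} [PseudoMetricSpace X] (Ω : Set X) (ε : ℝ) : Set X :=
  {x ∈ Ω | infDist x (frontier Ω) < ε}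

section BoundaryLayer

variable {X : Type*} [PseudoMetricSpace X] {Ω : Set X}

theorem boundaryLayer_mono : Monotone (boundaryLayer Ω) :=
  fun _ _ hεδ _ hx => ⟨hx.1, hx.2.trans_le hεδ⟩

theorem boundaryLayer_eq_inter_thickening (hfr : (frontier Ω).Nonempty) (ε : ℝ) :
    boundaryLayer Ω ε = Ω ∩ thickening ε (frontier Ω) := by
  ext x
  simp [boundaryLayer, mem_thickening_iff_infDist_lt hfr]

variable [MeasurableSpace X] {ν : Measure X}

theorem monotone_toReal_measure_boundaryLayer (hfin : ν Ω ≠ ∞) :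
    Monotone fun ε => (ν (boundaryLayer Ω ε)).toReal :=
  fun _ _ hεδ => ENNReal.toReal_mono (measure_ne_top_of_subset (fun _ hx => hx.1) hfin)
    (measure_mono (boundaryLayer_mono hεδ))

variable [OpensMeasurableSpace X]

theorem tendsto_measure_boundaryLayer (hΩ : IsOpen Ω) (hfr : (frontier Ω).Nonempty)
    (hfin : ν Ω ≠ ∞) : Tendsto (fun ε => ν (boundaryLayer Ω ε)) (𝓝[>] 0) (𝓝 0) := by
  have : IsFiniteMeasure (ν.restrict Ω) := isFiniteMeasure_restrict.2 hfin
  have h := tendsto_measure_thickening_of_isClosed (μ := ν.restrict Ω)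
    (s := frontier Ω) ⟨1, one_pos, measure_ne_top _ _⟩ isClosed_frontier
  have hΩfr : frontier Ω ∩ Ω = ∅ := by
    rw [hΩ.frontier_eq, sdiff_inter_self]
  simpa [Measure.restrict_apply isOpen_thickening.measurableSet,
    Measure.restrict_apply isClosed_frontier.measurableSet, hΩfr, inter_comm,
    boundaryLayer_eq_inter_thickening hfr] using h

theorem tendsto_toReal_measure_boundaryLayer (hΩ : IsOpen Ω) (hfr : (frontier Ω).Nonempty)
    (hfin : ν Ω ≠ ∞) :
    Tendsto (fun ε => (ν (boundaryLayer Ω ε)).toReal) (𝓝[>] 0) (𝓝 0) := by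
  have h := (ENNReal.tendsto_toReal ENNReal.zero_ne_top).comp
    (tendsto_measure_boundaryLayer hΩ hfr hfin)
  rwa [ENNReal.toReal_zero] at h

end BoundaryLayer

theorem nonempty_frontier_of_measure_pos_of_ne_top {X : Type*} [TopologicalSpace X]
    [PreconnectedSpace X] [MeasurableSpace X] {ν : Measure X} (hν : ν univ = ∞) {Ω : Set X}
    (hpos : 0 < ν Ω) (hfin : ν Ω ≠ ∞) : (frontier Ω).Nonempty :=
  nonempty_frontier_iff.2 ⟨nonempty_of_measure_ne_zero hpos.ne', fun h => hfin (h ▸ hν)⟩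

theorem sInf_superlevel_pos {f : ℝ → ℝ} (hf : Monotone f) (hf0 : Tendsto f (𝓝[>] 0) (𝓝 0))
    {t : ℝ} (ht : 0 < t) (hne : {ε | 0 < ε ∧ f ε ≥ t}.Nonempty) :
    0 < sInf {ε | 0 < ε ∧ f ε ≥ t} := by
  obtain ⟨δ, hfδ, hδ⟩ := ((hf0.eventually (gt_mem_nhds ht)).and self_mem_nhdsWithin).exists
  refine (mem_Ioi.1 hδ).trans_le (le_csInf hne fun ε hε => le_of_not_gt fun hεδ => ?_)
  exact (hf hεδ.le).trans_lt hfδ |>.not_ge hε.2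

theorem sqrt_mul_rpow_three_halves {x : ℝ} (hx : 0 ≤ x) : √x * x ^ ((3 : ℝ) / 2) = x ^ 2 := by
  rw [Real.sqrt_eq_rpow, ← Real.rpow_add' hx (by norm_num)]
  norm_num

theorem rpow_sub_one_div_two_mul_sqrt {Λ : ℝ} (hΛ : 0 < Λ) (x : ℝ) :
    Λ ^ ((x - 1) / 2) * √Λ = Λ ^ (x / 2) := by
  rw [Real.sqrt_eq_rpow, ← Real.rpow_add hΛ]
  ring_nf

theorem half_le_of_pleijel_le_remainder {x ω D V γ Λ R b : ℝ} (hx : 0 < x) (hω : 0 < ω)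
    (hD : 0 < D) (hΛ : 0 < Λ)
    (hPleijel : ω / D * (1 - γ) * V * Λ ^ (x / 2) ≤ R)
    (hR : R ≤ ω / D * b * Λ ^ (x / 2) + π * x ^ ((3 : ℝ) / 2) * ω / D * V *
      Λ ^ ((x - 1) / 2) / (2 * π * x ^ ((3 : ℝ) / 2) / ((1 - γ) * √Λ))) :
    1 / 2 * (1 - γ) * V ≤ b := by
  have hremainder : π * x ^ ((3 : ℝ) / 2) * ω / D * V * Λ ^ ((x - 1) / 2) /
      (2 * π * x ^ ((3 : ℝ) / 2) / ((1 - γ) * √Λ)) =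
        ω / D * Λ ^ (x / 2) * (1 / 2 * (1 - γ) * V) := by
    rw [← rpow_sub_one_div_two_mul_sqrt hΛ x]
    field_simp [Real.pi_ne_zero, (Real.rpow_pos_of_pos hx ((3 : ℝ) / 2)).ne']
  have hcoeff : 0 < ω / D * Λ ^ (x / 2) := by positivity
  rw [hremainder] at hR
  nlinarith

theorem le_sq_div_of_le_div_mul_sqrt {s a C Λ : ℝ} (hs : 0 < s) (ha : 0 < a) (hΛ : 0 < Λ)
    (h : s ≤ C / (a * √Λ)) : Λ ≤ (C / (a * s)) ^ 2 := by
  have hsqrt_le : √Λ ≤ C / (a * s) := by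
    rw [le_div_iff₀ (by positivity)] at h ⊢
    linarith
  calc Λ = √Λ ^ 2 := (Real.sq_sqrt hΛ.le).symm
    _ ≤ (C / (a * s)) ^ 2 := by gcongr

theorem courant_sharp_eigenvalue_bound_general (m : ℕ) (hm : 0 < m)
    (Ω : Set (EuclideanSpace ℝ (Fin m))) (hΩ : IsOpen Ω)
    (hfin : volume Ω ≠ ⊤) (hpos : 0 < volume Ω)
    (ωm : ℝ) (hωm : ωm = (volume (Metric.ball (0 : EuclideanSpace ℝ (Fin m)) 1)).toReal)
    (γ : ℝ) (hγ1 : γ < 1)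
    (μ : ℝ → ℝ)
    (hμ : μ = fun ε => (volume {x ∈ Ω | Metric.infDist x (frontier Ω) < ε}).toReal)
    (Λ : ℝ) (hΛ : 0 < Λ) (R : ℝ → ℝ)
    (hPleijel : ωm / (2 * π) ^ m * (1 - γ) * (volume Ω).toReal * Λ ^ ((m : ℝ) / 2) ≤ R Λ)
    (hR : ∀ ε : ℝ, 0 < ε →
      R Λ ≤ ωm / (2 * π) ^ m * μ (Real.sqrt m * ε) * Λ ^ ((m : ℝ) / 2) +
        π * (m : ℝ) ^ ((3 : ℝ) / 2) * ωm / (2 * π) ^ m * (volume Ω).toReal *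
          Λ ^ (((m : ℝ) - 1) / 2) / ε) :
    Λ ≤ (2 * π * (m : ℝ) ^ 2 /
          ((1 - γ) * sInf {ε : ℝ | 0 < ε ∧ μ ε ≥ 1 / 2 * (1 - γ) * (volume Ω).toReal})) ^ 2 := by
  set S := {ε : ℝ | 0 < ε ∧ μ ε ≥ 1 / 2 * (1 - γ) * (volume Ω).toReal}
  have hV : 0 < (volume Ω).toReal := ENNReal.toReal_pos hpos.ne' hfin
  have hω : 0 < ωm := hωm ▸ ENNReal.toReal_pos (measure_ball_pos volume 0 one_pos).ne'
    measure_ball_lt_top.ne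
  have hm' : (0 : ℝ) < m := Nat.cast_pos.2 hm
  have hγ : 0 < 1 - γ := sub_pos.2 hγ1
  set ε₀ := 2 * π * (m : ℝ) ^ ((3 : ℝ) / 2) / ((1 - γ) * √Λ) with hε₀
  have hε₀pos : 0 < ε₀ := by positivity
  have hmem : √m * ε₀ ∈ S := ⟨by positivity, half_le_of_pleijel_le_remainder hm' hω
    (by positivity) hΛ hPleijel (hR ε₀ hε₀pos)⟩
  have hfr : (frontier Ω).Nonempty := by
    have : Nonempty (Fin m) := ⟨⟨0, hm⟩⟩
    exact nonempty_frontier_of_measure_pos_of_ne_top (measure_univ_of_isAddLeftInvariant _)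
      hpos hfin
  have hS : 0 < sInf S := by
    subst hμ
    exact sInf_superlevel_pos (monotone_toReal_measure_boundaryLayer hfin)
      (tendsto_toReal_measure_boundaryLayer hΩ hfr hfin) (by positivity) ⟨_, hmem⟩
  have hle : sInf S ≤ √m * ε₀ := csInf_le ⟨0, fun _ hε => hε.1.le⟩ hmem
  have hwidth : √m * ε₀ = 2 * π * (m : ℝ) ^ 2 / ((1 - γ) * √Λ) := by
    rw [hε₀, ← sqrt_mul_rpow_three_halves hm'.le]
    ring
  exact le_sq_div_of_le_div_mul_sqrt hS hγ hΛ (hwidth ▸ hle)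

/-- Upper bound for a Courant-sharp Dirichlet eigenvalue `Λ = λ_n(Ω)`:
assuming the Pleijel-type inequality `(ω_m/(2π)^m)(1-γ_m)|Ω|Λ^{m/2} ≤ R_Ω(Λ)` and the
remainder bound `R_Ω(Λ) ≤ (ω_m/(2π)^m) μ_Ω(√m ε) Λ^{m/2} + (π m^{3/2} ω_m/(2π)^m)|Ω|Λ^{(m-1)/2}/ε`
for all `ε > 0`, we get `Λ ≤ (2π m² / ((1-γ_m) ε(Ω)))²` where
`ε(Ω) = inf{ε > 0 : μ_Ω(ε) ≥ (1/2)(1-γ_m)|Ω|}`. -/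
theorem courant_sharp_eigenvalue_bound (m : ℕ) (hm : 0 < m)
    (Ω : Set (EuclideanSpace ℝ (Fin m))) (hΩ : IsOpen Ω)
    (hfin : volume Ω ≠ ⊤) (hpos : 0 < volume Ω)
    (ωm : ℝ) (hωm : ωm = (volume (Metric.ball (0 : EuclideanSpace ℝ (Fin m)) 1)).toReal)
    (lam1B : ℝ) (hB : 0 < lam1B)
    (γ : ℝ) (hγ : γ = (2 * π) ^ m * (ωm ^ 2)⁻¹ * lam1B ^ (-((m : ℝ) / 2))) (hγ1 : γ < 1)
    (μ : ℝ → ℝ)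
    (hμ : μ = fun ε => (volume {x ∈ Ω | Metric.infDist x (frontier Ω) < ε}).toReal)
    (Λ : ℝ) (hΛ : 0 < Λ) (R : ℝ → ℝ)
    (hPleijel : ωm / (2 * π) ^ m * (1 - γ) * (volume Ω).toReal * Λ ^ ((m : ℝ) / 2) ≤ R Λ)
    (hR : ∀ ε : ℝ, 0 < ε →
      R Λ ≤ ωm / (2 * π) ^ m * μ (Real.sqrt m * ε) * Λ ^ ((m : ℝ) / 2) +
        π * (m : ℝ) ^ ((3 : ℝ) / 2) * ωm / (2 * π) ^ m * (volume Ω).toReal *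
          Λ ^ (((m : ℝ) - 1) / 2) / ε) :
    Λ ≤ (2 * π * (m : ℝ) ^ 2 /
          ((1 - γ) * sInf {ε : ℝ | 0 < ε ∧ μ ε ≥ 1 / 2 * (1 - γ) * (volume Ω).toReal})) ^ 2 :=
  courant_sharp_eigenvalue_bound_general m hm Ω hΩ hfin hpos ωm hωm γ hγ1 μ hμ Λ hΛ R hPleijel hR
end

section
/- Let K ⊂ ℝ² be the von Koch snowflake domain generated by a unit square with similarity ratio 1/3 (generation j consists of 4·5^{j−1} squares of side 3^{−j}). Then for 0 < ε < 1/18, the inner collar measure satisfies μ_K(ε) ≤ (84/5) · 2^{−log 5/log 3} · ε^{2 − log 5/log 3}. -/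
/-
Fix `N` with `3^{-(N+1)} < 2ε ≤ 3^{-N}`. Up to a null set `K` is covered by the generating
squares, and the frontier of `K` never enters one of these open squares, so a square of side
`s ≥ 2ε` meets the `ε`-collar only inside its inner frame of area `s² - (s - 2ε)²`; the squares of
generations `j > N` are simply bounded by their area. Summing, the collar has measure at most
`4ε(2(5/3)^N - 1) - 4ε²5^N + (5/9)^N ≤ (2ε)² 5^N (y² + 4y - 1)` with `y = (2ε·3^N)⁻¹ ∈ [1, 3]`,
and `y² + 4y - 1 ≤ (21/5) y^{log 5/log 3}` on `[1, 3]` (compare with tangent lines of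
`y^{log 5/log 3}` at `1`, `√3`, `3`) turns this into `(84/5) 2^{-log 5/log 3} ε^{2 - log 5/log 3}`.
-/

open MeasureTheory Real

noncomputable def kochDim : ℝ := log 5 / log 3

lemma three_rpow_kochDim : (3 : ℝ) ^ kochDim = 5 := by
  rw [kochDim, rpow_def_of_pos (by norm_num), mul_div_cancel₀ _ (log_pos (by norm_num)).ne',
    exp_log (by norm_num)]

lemma sqrt_three_rpow_kochDim : √3 ^ kochDim = √5 := by
  rw [sqrt_eq_rpow, sqrt_eq_rpow, ← rpow_mul (by norm_num), mul_comm, rpow_mul (by norm_num),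
    three_rpow_kochDim]

lemma kochDim_mem_Icc : kochDim ∈ Set.Icc (73 / 50) (147 / 100) := by
  have h3 := log_pos (by norm_num : (1 : ℝ) < 3)
  have h1 : ((73 : ℕ) : ℝ) * log 3 ≤ (50 : ℕ) * log 5 := by
    rw [← log_pow, ← log_pow]; exact log_le_log (by positivity) (by norm_num)
  have h2 : ((100 : ℕ) : ℝ) * log 5 ≤ (147 : ℕ) * log 3 := by
    rw [← log_pow, ← log_pow]; exact log_le_log (by positivity) (by norm_num)
  push_cast at h1 h2
  constructor
  · rw [kochDim, le_div_iff₀ h3]; linarith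
  · rw [kochDim, div_le_iff₀ h3]; linarith

lemma rpow_tangent_le {p m y : ℝ} (hp : 1 ≤ p) (hm : 0 < m) (hy : 0 ≤ y) :
    m ^ p * (1 + p * (y / m - 1)) ≤ y ^ p := by
  have h := one_add_mul_self_le_rpow_one_add (by linarith [div_nonneg hy hm.le] : -1 ≤ y / m - 1) hp
  rw [add_sub_cancel, div_rpow hy hm.le, le_div_iff₀' (rpow_pos_of_pos hm p)] at h
  exact h

lemma quadratic_le_rpow_kochDim {y : ℝ} (hy1 : 1 ≤ y) (hy3 : y ≤ 3) :
    y ^ 2 + 4 * y - 1 ≤ 21 / 5 * y ^ kochDim := by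
  obtain ⟨hlo, hhi⟩ := kochDim_mem_Icc
  have hp : 1 ≤ kochDim := le_trans (by norm_num) hlo
  have hy0 : 0 ≤ y := by linarith
  rcases le_or_gt y (3 / 2) with hy | hy
  · have htan := rpow_tangent_le hp one_pos hy0
    rw [one_rpow, div_one] at htan
    nlinarith [mul_le_mul_of_nonneg_right hlo (sub_nonneg.2 hy1)]
  rcases le_or_gt y (13 / 5) with hy' | hy'
  · have htan := rpow_tangent_le hp (sqrt_pos.2 (by norm_num : (0 : ℝ) < 3)) hy0
    rw [sqrt_three_rpow_kochDim] at htan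
    have h3 : √3 ≠ 0 := by positivity
    set c := √5 / √3
    have hc : √5 * (1 + kochDim * (y / √3 - 1)) = √5 + kochDim * (c * y - √5) := by
      simp only [c]; field_simp
    have hc2 : c ^ 2 = 5 / 3 := by
      simp only [c]; rw [div_pow, sq_sqrt (by norm_num), sq_sqrt (by norm_num)]
    have hcl : 1.2909 ≤ c := by nlinarith [show 0 ≤ c by positivity]
    have r5u : √5 ≤ 2.2361 := (sqrt_le_left (by norm_num)).2 (by norm_num)
    have hx : -0.31 ≤ c * y - √5 := by nlinarith
    -- `kochDim * x ≥ 1.46 * x - 0.01 * 0.31` for `x = c * y - √5 ≥ -0.31`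
    have hlin : 1.8847 * y - 1.0318 ≤ y ^ kochDim := by
      nlinarith [mul_nonneg (sub_nonneg.2 hlo) (by linarith : 0 ≤ c * y - √5 + 0.31)]
    nlinarith
  · have htan := rpow_tangent_le hp (by norm_num : (0 : ℝ) < 3) hy0
    rw [three_rpow_kochDim] at htan
    nlinarith [mul_le_mul_of_nonpos_right hhi (by linarith : y / 3 - 1 ≤ 0)]

lemma pow_five_eq_rpow_kochDim (N : ℕ) : (5 : ℝ) ^ N = ((3 : ℝ) ^ N) ^ kochDim := by
  rw [← three_rpow_kochDim, ← rpow_natCast, ← rpow_natCast, ← rpow_mul (by norm_num),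
    ← rpow_mul (by norm_num), mul_comm]

lemma koch_collar_sum_le {ε : ℝ} {N : ℕ} (hε : 0 < ε) (hN1 : (1 / 3 : ℝ) ^ (N + 1) < 2 * ε)
    (hN : 2 * ε ≤ (1 / 3 : ℝ) ^ N) :
    4 * ε * (2 * (5 / 3 : ℝ) ^ N - 1) - 4 * ε ^ 2 * 5 ^ N + (5 / 9 : ℝ) ^ N ≤
      84 / 5 * (2 : ℝ) ^ (-kochDim) * ε ^ (2 - kochDim) := by
  set t : ℝ := 3 ^ N
  have ht : 0 < t := by positivity
  have ht' : (1 / 3 : ℝ) ^ N = t⁻¹ := by rw [one_div, inv_pow]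
  set y := (2 * ε * t)⁻¹
  have hy1 : 1 ≤ y := by
    refine (one_le_inv₀ (by positivity)).2 ?_
    calc 2 * ε * t ≤ t⁻¹ * t := by rw [← ht']; gcongr
      _ = 1 := inv_mul_cancel₀ ht.ne'
  have hy3 : y ≤ 3 := by
    refine (inv_le_comm₀ (by positivity) (by norm_num)).2 ?_
    calc (3 : ℝ)⁻¹ = (1 / 3) ^ (N + 1) * t := by rw [pow_succ, ht']; field_simp
      _ ≤ 2 * ε * t := by gcongr
  have hy : (5 : ℝ) ^ N * y ^ kochDim = (2 * ε) ^ (-kochDim) := by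
    have hty : t * y = (2 * ε)⁻¹ := by simp only [y]; field_simp
    rw [pow_five_eq_rpow_kochDim, ← mul_rpow ht.le (by positivity), hty, inv_rpow (by positivity),
      rpow_neg (by positivity)]
  calc 4 * ε * (2 * (5 / 3 : ℝ) ^ N - 1) - 4 * ε ^ 2 * 5 ^ N + (5 / 9 : ℝ) ^ N
      ≤ 8 * ε * (5 / 3 : ℝ) ^ N - 4 * ε ^ 2 * 5 ^ N + (5 / 9 : ℝ) ^ N := by linarith
    _ = (2 * ε) ^ 2 * 5 ^ N * (y ^ 2 + 4 * y - 1) := by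
      rw [div_pow, div_pow, show (9 : ℝ) ^ N = t ^ 2 by rw [← pow_mul, mul_comm, pow_mul]; norm_num]
      simp only [y]
      field_simp
      ring
    _ ≤ (2 * ε) ^ 2 * 5 ^ N * (21 / 5 * y ^ kochDim) := by
      gcongr
      exact quadratic_le_rpow_kochDim hy1 hy3
    _ = 84 / 5 * (2 : ℝ) ^ (-kochDim) * ε ^ (2 - kochDim) := by
      have h2 : (2 * ε) ^ 2 * (2 * ε) ^ (-kochDim) =
          4 * (2 : ℝ) ^ (-kochDim) * ε ^ (2 - kochDim) := by
        rw [← rpow_natCast, ← rpow_add (by positivity), mul_rpow (by norm_num) hε.le,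
          add_comm, rpow_add (by norm_num), ← sub_eq_neg_add]
        norm_num [mul_comm]
      rw [mul_assoc, mul_left_comm (5 ^ N : ℝ), hy]
      linear_combination 21 / 5 * h2

section Cube

variable {ι : Type*}

def openCube (a : ι → ℝ) (s : ℝ) : Set (EuclideanSpace ℝ ι) :=
  {y | ∀ d, a d < y d ∧ y d < a d + s}

lemma openCube_eq_preimage (a : ι → ℝ) (s : ℝ) :
    openCube a s = WithLp.ofLp ⁻¹' Set.univ.pi fun d => Set.Ioo (a d) (a d + s) := by
  ext y
  simp [openCube]

lemma isOpen_openCube [Finite ι] (a : ι → ℝ) (s : ℝ) : IsOpen (openCube a s) := by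
  rw [openCube_eq_preimage]
  exact (isOpen_set_pi Set.finite_univ fun d _ => isOpen_Ioo).preimage (PiLp.continuous_ofLp 2 _)

lemma volume_openCube [Fintype ι] (a : ι → ℝ) (s : ℝ) :
    volume (openCube a s) = ENNReal.ofReal s ^ Fintype.card ι := by
  rw [openCube_eq_preimage, (PiLp.volume_preserving_ofLp ι).measure_preimage
    (MeasurableSet.univ_pi fun _ => measurableSet_Ioo).nullMeasurableSet, volume_pi_pi]
  simp [Real.volume_Ioo]

lemma mem_openCube_of_dist_lt [Fintype ι] {a : ι → ℝ} {s ε : ℝ} {x y : EuclideanSpace ℝ ι}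
    (hx : x ∈ openCube (fun d => a d + ε) (s - 2 * ε)) (hxy : dist x y < ε) :
    y ∈ openCube a s := by
  intro d
  have hd := (PiLp.dist_apply_le x y d).trans_lt hxy
  rw [Real.dist_eq, abs_lt] at hd
  constructor <;> linarith [(hx d).1, (hx d).2]

lemma volume_openCube_diff_openCube [Fintype ι] {a : ι → ℝ} {s ε : ℝ} (hε : 0 ≤ ε)
    (hs : 2 * ε ≤ s) :
    volume (openCube a s \ openCube (fun d => a d + ε) (s - 2 * ε)) =
      ENNReal.ofReal (s ^ Fintype.card ι - (s - 2 * ε) ^ Fintype.card ι) := by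
  have hsub : openCube (fun d => a d + ε) (s - 2 * ε) ⊆ openCube a s := fun y hy d => by
    constructor <;> linarith [(hy d).1, (hy d).2]
  rw [measure_sdiff hsub (isOpen_openCube _ _).nullMeasurableSet (by simp [volume_openCube]),
    volume_openCube, volume_openCube, ← ENNReal.ofReal_pow (by linarith),
    ← ENNReal.ofReal_pow (by linarith), ← ENNReal.ofReal_sub _ (by positivity)]

lemma setOf_infDist_lt_inter_openCube_subset [Fintype ι] {F : Set (EuclideanSpace ℝ ι)}
    (hF : F.Nonempty) {a : ι → ℝ} {s ε : ℝ} (hdisj : Disjoint F (openCube a s)) :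
    {x | Metric.infDist x F < ε} ∩ openCube a s ⊆
      openCube a s \ openCube (fun d => a d + ε) (s - 2 * ε) := by
  rintro x ⟨hxF, hx⟩
  refine ⟨hx, fun hin => ?_⟩
  obtain ⟨y, hyF, hxy⟩ := (Metric.infDist_lt_iff hF).1 hxF
  exact hdisj.notMem_of_mem_left hyF (mem_openCube_of_dist_lt hin hxy)

lemma nonempty_openCube (a : ι → ℝ) {s : ℝ} (hs : 0 < s) : (openCube a s).Nonempty :=
  ⟨WithLp.toLp 2 fun d => a d + s / 2, fun d => by constructor <;> dsimp <;> linarith⟩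

end Cube

lemma measure_inter_iUnion_range_le_ofReal {α : Type*} [MeasurableSpace α] (μ : Measure α)
    {T : Set α} {n : ℕ → ℕ} {s : ℕ → ℕ → Set α} {b : ℕ → ℝ} {a : ℝ}
    (hs : ∀ j, ∀ i < n j, μ (T ∩ s j i) ≤ ENNReal.ofReal (b j)) (hb : ∀ j, 0 ≤ b j)
    (ha : HasSum (fun j => n j * b j) a) :
    μ (T ∩ ⋃ j, ⋃ i ∈ Finset.range (n j), s j i) ≤ ENNReal.ofReal a := by
  simp only [Set.inter_iUnion]
  calc μ (⋃ j, ⋃ i ∈ Finset.range (n j), T ∩ s j i)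
      ≤ ∑' j, ∑ i ∈ Finset.range (n j), μ (T ∩ s j i) :=
        (measure_iUnion_le _).trans (ENNReal.tsum_le_tsum fun j => measure_biUnion_finset_le _ _)
    _ ≤ ∑' j, ENNReal.ofReal (n j * b j) := by
      refine ENNReal.tsum_le_tsum fun j =>
        (Finset.sum_le_sum fun i hi => hs j i (Finset.mem_range.1 hi)).trans_eq ?_
      rw [Finset.sum_const, Finset.card_range, nsmul_eq_mul, ENNReal.ofReal_mul (Nat.cast_nonneg _),
        ENNReal.ofReal_natCast]
    _ = ENNReal.ofReal a := by
      rw [← ENNReal.ofReal_tsum_of_nonneg (fun j => mul_nonneg (Nat.cast_nonneg _) (hb j))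
        ha.summable, ha.tsum_eq]

lemma measure_le_ofReal_of_measure_sdiff_iUnion_eq_zero {α : Type*} [MeasurableSpace α]
    (μ : Measure α) {K T : Set α} {n : ℕ → ℕ} {s : ℕ → ℕ → Set α} {b : ℕ → ℝ} {a : ℝ}
    (hK : μ (K \ ⋃ j, ⋃ i ∈ Finset.range (n j), s j i) = 0) (hT : T ⊆ K)
    (hs : ∀ j, ∀ i < n j, μ (T ∩ s j i) ≤ ENNReal.ofReal (b j)) (hb : ∀ j, 0 ≤ b j)
    (ha : HasSum (fun j => n j * b j) a) :
    μ T ≤ ENNReal.ofReal a := by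
  rw [← measure_inter_conull' (measure_mono_null (Set.sdiff_subset_sdiff_left hT) hK)]
  exact measure_inter_iUnion_range_le_ofReal μ hs hb ha

lemma nonempty_frontier_of_measure_ne_top {E : Type*} [NormedAddCommGroup E] [NormedSpace ℝ E]
    [Nontrivial E] [MeasurableSpace E] [BorelSpace E] [FiniteDimensional ℝ E] (μ : Measure E)
    [μ.IsAddHaarMeasure] {K : Set E} (hne : K.Nonempty) (hfin : μ K ≠ ⊤) :
    (frontier K).Nonempty :=
  nonempty_frontier_iff.2 ⟨hne, fun h => hfin (h ▸ measure_univ_of_isAddLeftInvariant μ)⟩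

def kochCount : ℕ → ℕ
  | 0 => 1
  | j + 1 => 4 * 5 ^ j

lemma sum_range_kochCount (N : ℕ) : ∑ j ∈ Finset.range (N + 1), (kochCount j : ℝ) = 5 ^ N := by
  induction N with
  | zero => simp [kochCount]
  | succ N ih => rw [Finset.sum_range_succ, ih, kochCount]; push_cast; ring

lemma sum_range_kochCount_mul_third_pow (N : ℕ) :
    ∑ j ∈ Finset.range (N + 1), (kochCount j : ℝ) * (1 / 3) ^ j = 2 * (5 / 3) ^ N - 1 := by
  induction N with
  | zero => norm_num [kochCount]
  | succ N ih =>
    rw [Finset.sum_range_succ, ih, kochCount]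
    simp only [div_pow, one_pow]
    push_cast
    field_simp
    ring

lemma hasSum_kochCount_mul_ninth_pow_tail (N : ℕ) :
    HasSum (fun k => (kochCount (k + (N + 1)) : ℝ) * (1 / 9) ^ (k + (N + 1))) ((5 / 9) ^ N) := by
  have h := (hasSum_geometric_of_lt_one (by norm_num : (0 : ℝ) ≤ 5 / 9) (by norm_num)).mul_left
    (4 / 9 * (5 / 9 : ℝ) ^ N)
  have hf : (fun k => (kochCount (k + (N + 1)) : ℝ) * (1 / 9) ^ (k + (N + 1))) =
      fun k => 4 / 9 * (5 / 9 : ℝ) ^ N * (5 / 9) ^ k := by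
    ext k
    rw [← add_assoc, kochCount]
    simp only [div_pow, one_pow]
    push_cast
    field_simp
    ring
  rw [show 4 / 9 * (5 / 9 : ℝ) ^ N * (1 - 5 / 9)⁻¹ = (5 / 9) ^ N by ring] at h
  rwa [hf]

lemma hasSum_kochCount_mul_ninth_pow : HasSum (fun j => (kochCount j : ℝ) * (1 / 9) ^ j) 2 := by
  rw [← hasSum_nat_add_iff' 1]
  have := hasSum_kochCount_mul_ninth_pow_tail 0
  norm_num [kochCount] at this ⊢
  exact this

noncomputable def collarBound (ε : ℝ) (N j : ℕ) : ℝ :=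
  if j ≤ N then 4 * ε * (1 / 3) ^ j - 4 * ε ^ 2 else (1 / 9) ^ j

lemma collarBound_nonneg {ε : ℝ} {N : ℕ} (hε : 0 ≤ ε) (hN : 2 * ε ≤ (1 / 3 : ℝ) ^ N) (j : ℕ) :
    0 ≤ collarBound ε N j := by
  unfold collarBound
  split_ifs with hj
  · nlinarith [pow_le_pow_of_le_one (by norm_num : (0 : ℝ) ≤ 1 / 3) (by norm_num) hj]
  · positivity

lemma hasSum_kochCount_mul_collarBound (ε : ℝ) (N : ℕ) :
    HasSum (fun j => (kochCount j : ℝ) * collarBound ε N j)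
      (4 * ε * (2 * (5 / 3 : ℝ) ^ N - 1) - 4 * ε ^ 2 * 5 ^ N + (5 / 9 : ℝ) ^ N) := by
  rw [← hasSum_nat_add_iff' (N + 1)]
  have head : ∑ j ∈ Finset.range (N + 1), (kochCount j : ℝ) * collarBound ε N j =
      4 * ε * (2 * (5 / 3 : ℝ) ^ N - 1) - 4 * ε ^ 2 * 5 ^ N := by
    rw [← sum_range_kochCount_mul_third_pow, ← sum_range_kochCount, Finset.mul_sum,
      Finset.mul_sum, ← Finset.sum_sub_distrib]
    refine Finset.sum_congr rfl fun j hj => ?_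
    simp only [collarBound, if_pos (Nat.lt_succ_iff.1 (Finset.mem_range.1 hj))]
    ring
  have tail : (fun k => (kochCount (k + (N + 1)) : ℝ) * collarBound ε N (k + (N + 1))) =
      fun k => (kochCount (k + (N + 1)) : ℝ) * (1 / 9) ^ (k + (N + 1)) := by
    ext k
    simp only [collarBound, if_neg (show ¬k + (N + 1) ≤ N by omega)]
  rw [head, add_sub_cancel_left, tail]
  exact hasSum_kochCount_mul_ninth_pow_tail N

lemma volume_openCube_third_pow (a : Fin 2 → ℝ) (j : ℕ) :
    volume (openCube a ((1 / 3) ^ j)) = ENNReal.ofReal ((1 / 9) ^ j) := by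
  rw [volume_openCube, Fintype.card_fin, ← ENNReal.ofReal_pow (by positivity), ← pow_mul,
    mul_comm, pow_mul]
  norm_num

lemma volume_collar_inter_openCube_le_collarBound {K : Set (EuclideanSpace ℝ (Fin 2))}
    (hK : (frontier K).Nonempty) {a : Fin 2 → ℝ} {ε : ℝ} {N j : ℕ}
    (hsub : openCube a ((1 / 3) ^ j) ⊆ K) (hε : 0 ≤ ε) (hN : 2 * ε ≤ (1 / 3 : ℝ) ^ N) :
    volume ({x ∈ K | Metric.infDist x (frontier K) < ε} ∩ openCube a ((1 / 3) ^ j)) ≤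
      ENNReal.ofReal (collarBound ε N j) := by
  unfold collarBound
  split_ifs with hj
  · have hs : 2 * ε ≤ (1 / 3 : ℝ) ^ j :=
      hN.trans (pow_le_pow_of_le_one (by norm_num) (by norm_num) hj)
    have hdisj : Disjoint (frontier K) (openCube a ((1 / 3) ^ j)) :=
      (disjoint_interior_frontier.mono_left (interior_maximal hsub (isOpen_openCube _ _))).symm
    calc _ ≤ _ := measure_mono (Set.inter_subset_inter_left _ fun x hx => hx.2)
      _ ≤ _ := measure_mono (setOf_infDist_lt_inter_openCube_subset hK hdisj)
      _ = _ := volume_openCube_diff_openCube hε hs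
      _ = _ := by rw [Fintype.card_fin]; ring_nf
  · exact (measure_mono Set.inter_subset_right).trans (volume_openCube_third_pow a j).le

theorem koch_snowflake_collar_bound_general
    (K : Set (EuclideanSpace ℝ (Fin 2)))
    (count : ℕ → ℕ) (hcount0 : count 0 = 1)
    (hcount : ∀ j : ℕ, 1 ≤ j → count j = 4 * 5 ^ (j - 1))
    (corner : ℕ → ℕ → Fin 2 → ℝ)
    (sq : ℕ → ℕ → Set (EuclideanSpace ℝ (Fin 2)))
    (hsq : ∀ j i, sq j i =
      {y : EuclideanSpace ℝ (Fin 2) | ∀ d, corner j i d < y d ∧ y d < corner j i d + (1 / 3) ^ j})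
    (hsub : ∀ j : ℕ, ∀ i < count j, sq j i ⊆ K)
    (hnull : volume (K \ ⋃ j : ℕ, ⋃ i ∈ Finset.range (count j), sq j i) = 0)
    (ε : ℝ) (hε0 : 0 < ε) (hε : ε < 1 / 18) :
    (volume {x ∈ K | Metric.infDist x (frontier K) < ε}).toReal ≤
      84 / 5 * (2 : ℝ) ^ (-(Real.log 5 / Real.log 3)) *
        ε ^ (2 - Real.log 5 / Real.log 3) := by
  obtain rfl : count = kochCount := funext fun j => by cases j <;> simp [hcount0, hcount, kochCount]
  obtain rfl : sq = fun j i => openCube (corner j i) ((1 / 3) ^ j) := funext₂ hsq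
  have hKfin : volume K ≠ ⊤ := ne_top_of_le_ne_top ENNReal.ofReal_ne_top <|
    measure_le_ofReal_of_measure_sdiff_iUnion_eq_zero volume hnull subset_rfl
      (fun j i _ => (measure_mono Set.inter_subset_right).trans (volume_openCube_third_pow _ j).le)
      (fun j => by positivity) hasSum_kochCount_mul_ninth_pow
  have hfront : (frontier K).Nonempty := nonempty_frontier_of_measure_ne_top volume
    ((nonempty_openCube (corner 0 0) (by positivity)).mono (hsub 0 0 (by simp [kochCount]))) hKfin
  obtain ⟨N, hN1, hN⟩ := exists_nat_pow_near_of_lt_one (by positivity : 0 < 2 * ε) (by linarith)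
    (by norm_num : (0 : ℝ) < 1 / 3) (by norm_num)
  refine ENNReal.toReal_le_of_le_ofReal (by positivity) <| le_trans ?_
    (ENNReal.ofReal_le_ofReal (koch_collar_sum_le hε0 hN1 hN))
  exact measure_le_ofReal_of_measure_sdiff_iUnion_eq_zero volume hnull (Set.sep_subset _ _)
    (fun j i hi => volume_collar_inter_openCube_le_collarBound hfront (hsub j i hi) hε0.le hN)
    (collarBound_nonneg hε0.le hN) (hasSum_kochCount_mul_collarBound ε N)

/-- Collar estimate for the von Koch snowflake `K ⊆ ℝ²` generated by a unit square with
similarity ratio `1/3`: `K` is the interior of the closure of the union of one unit square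
(generation `0`) and `4·5^{j-1}` pairwise disjoint open squares of side `3^{-j}` at each
generation `j ≥ 1`.  For `0 < ε < 1/18`,
`μ_K(ε) ≤ (84/5)·2^{-log 5/log 3}·ε^{2 - log 5/log 3}`. -/
theorem koch_snowflake_collar_bound
    (K : Set (EuclideanSpace ℝ (Fin 2))) (hK : IsOpen K)
    (count : ℕ → ℕ) (hcount0 : count 0 = 1)
    (hcount : ∀ j : ℕ, 1 ≤ j → count j = 4 * 5 ^ (j - 1))
    (corner : ℕ → ℕ → Fin 2 → ℝ)
    (sq : ℕ → ℕ → Set (EuclideanSpace ℝ (Fin 2)))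
    (hsq : ∀ j i, sq j i =
      {y : EuclideanSpace ℝ (Fin 2) | ∀ d, corner j i d < y d ∧ y d < corner j i d + (1 / 3) ^ j})
    (hsub : ∀ j : ℕ, ∀ i < count j, sq j i ⊆ K)
    (hdisj : ∀ j i j' i', i < count j → i' < count j' → (j, i) ≠ (j', i') →
      Disjoint (sq j i) (sq j' i'))
    (hKint : K = interior (closure (⋃ j : ℕ, ⋃ i ∈ Finset.range (count j), sq j i)))
    (hnull : volume (K \ ⋃ j : ℕ, ⋃ i ∈ Finset.range (count j), sq j i) = 0)
    (ε : ℝ) (hε0 : 0 < ε) (hε : ε < 1 / 18) :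
    (volume {x ∈ K | Metric.infDist x (frontier K) < ε}).toReal ≤
      84 / 5 * (2 : ℝ) ^ (-(Real.log 5 / Real.log 3)) *
        ε ^ (2 - Real.log 5 / Real.log 3) :=
  koch_snowflake_collar_bound_general K count hcount0 hcount corner sq hsq hsub hnull ε hε0 hε
end
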